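/- Dynamic programming principle for the regularized MDP (Proposition C.1 in kernel form): For every x ∈ 𝒳, V_h(x) = sup over all policies π of V^π(x), where V^π is the unique bounded measurable fixed point of T^π and V_h is the unique bounded measurable fixed point of T*; moreover this supremum is attained by the Gibbs policy π*_h(x,u) := exp( (r(x,u)h + γ ∫_𝒳 V_h(y) κ(x,u)(dy)) / (λh) ) / ∫_𝒰 exp( (r(x,u')h + γ ∫_𝒳 V_h(y) κ(x,u')(dy)) / (λh) ) μ(du'). -/

import Mathlib

/-!
Gibbs' variational inequality `∫ (a - c log ρ) ρ dμ ≤ c log ∫ exp (a / c) dμ` for probability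
densities `ρ`, with equality at the Gibbs density `ρ ∝ exp (a / c)`, gives `T^π W ≤ T* W` for
every policy `π` and `T^{π*} V_h = T* V_h = V_h`. If `V^π` is a bounded fixed point of `T^π` and
`D` bounds `V^π - V_h` from above, then `V^π - V_h ≤ T^π V^π - T^π V_h ≤ γ D`; taking
`D = sup (V^π - V_h)` gives `D ≤ γ D`, hence `D ≤ 0` because `γ < 1`.
-/

open MeasureTheory

def IsPolicy {𝒳 𝒰 : Type*} [MeasurableSpace 𝒳] [MeasurableSpace 𝒰]
    (μ : Measure 𝒰) (π : 𝒳 × 𝒰 → ℝ) : Prop :=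
  Measurable π ∧ (∃ C : ℝ, ∀ p, π p ≤ C) ∧ (∀ p, 0 ≤ π p) ∧
    ∀ x, ∫ u, π (x, u) ∂μ = 1

/-- The convention `0·ln 0 = 0` holds automatically since `Real.log 0 = 0`. -/
noncomputable def Tpol {𝒳 𝒰 : Type*} [MeasurableSpace 𝒳] [MeasurableSpace 𝒰]
    (μ : Measure 𝒰) (κ : ProbabilityTheory.Kernel (𝒳 × 𝒰) 𝒳) (r : 𝒳 × 𝒰 → ℝ)
    (h lam γ : ℝ) (π : 𝒳 × 𝒰 → ℝ) (W : 𝒳 → ℝ) : 𝒳 → ℝ :=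
  fun x => ∫ u,
    (r (x, u) * h - lam * h * Real.log (π (x, u)) + γ * ∫ y, W y ∂(κ (x, u)))
      * π (x, u) ∂μ

noncomputable def Tstar {𝒳 𝒰 : Type*} [MeasurableSpace 𝒳] [MeasurableSpace 𝒰]
    (μ : Measure 𝒰) (κ : ProbabilityTheory.Kernel (𝒳 × 𝒰) 𝒳) (r : 𝒳 × 𝒰 → ℝ)
    (h lam γ : ℝ) (W : 𝒳 → ℝ) : 𝒳 → ℝ :=
  fun x => lam * h *
    Real.log (∫ u, Real.exp ((r (x, u) * h + γ * ∫ y, W y ∂(κ (x, u))) / (lam * h)) ∂μ)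

section Gibbs

open Real

variable {α : Type*} [MeasurableSpace α] {μ : Measure α}

theorem mul_sub_mul_log_le_exp_sub {t : ℝ} (ht : 0 ≤ t) (s : ℝ) :
    t * s - t * log t ≤ exp s - t := by
  rcases ht.eq_or_lt with rfl | ht
  · simpa using (exp_pos s).le
  · have h := add_one_le_exp (s - log t)
    rw [exp_sub, exp_log ht, le_div_iff₀ ht] at h
    linear_combination h

theorem integrable_of_abs_le [IsFiniteMeasure μ] {f : α → ℝ} (hf : Measurable f)
    (hC : ∃ C, ∀ u, |f u| ≤ C) : Integrable f μ :=
  let ⟨C, hC⟩ := hC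
  .of_bound hf.aestronglyMeasurable C (ae_of_all _ hC)

theorem integrable_exp_of_le [IsFiniteMeasure μ] {a : α → ℝ} (ha : Measurable a) {C : ℝ}
    (hC : ∀ u, a u ≤ C) : Integrable (fun u => exp (a u)) μ :=
  .of_bound ha.exp.aestronglyMeasurable (exp C)
    (ae_of_all _ fun u => by rw [norm_of_nonneg (exp_pos _).le]; exact exp_le_exp.2 (hC u))

theorem integrable_mul_sub_log_mul [IsFiniteMeasure μ] (c : ℝ) {a ρ : α → ℝ}
    (ha : Measurable a) (haB : ∃ C, ∀ u, |a u| ≤ C) (hρ : Measurable ρ) (hρ0 : ∀ u, 0 ≤ ρ u)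
    (hρB : ∃ C, ∀ u, ρ u ≤ C) : Integrable (fun u => (a u - c * log (ρ u)) * ρ u) μ := by
  obtain ⟨Ca, hCa⟩ := haB
  obtain ⟨Cρ, hCρ⟩ := hρB
  obtain ⟨M, hM⟩ := isCompact_Icc.exists_bound_of_continuousOn
    (continuous_mul_log.continuousOn (s := Set.Icc 0 Cρ))
  refine .of_bound ((ha.sub (hρ.log.const_mul c)).mul hρ).aestronglyMeasurable
    (Ca * Cρ + |c| * M) (ae_of_all _ fun u => ?_)
  have hmul : |a u| * ρ u ≤ Ca * Cρ :=
    mul_le_mul (hCa u) (hCρ u) (hρ0 u) ((abs_nonneg _).trans (hCa u))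
  have hlog : |c| * |ρ u * log (ρ u)| ≤ |c| * M :=
    mul_le_mul_of_nonneg_left (hM _ ⟨hρ0 u, hCρ u⟩) (abs_nonneg c)
  calc ‖(a u - c * log (ρ u)) * ρ u‖ = |a u * ρ u - c * (ρ u * log (ρ u))| := by
        rw [norm_eq_abs]; ring_nf
    _ ≤ |a u| * ρ u + |c| * |ρ u * log (ρ u)| := by
        rw [← abs_of_nonneg (hρ0 u), ← abs_mul, ← abs_mul, abs_of_nonneg (hρ0 u)]
        exact abs_sub _ _
    _ ≤ Ca * Cρ + |c| * M := add_le_add hmul hlog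

theorem integral_mul_sub_log_le_log_integral_exp {c : ℝ} (hc : 0 < c) {a ρ : α → ℝ}
    (hρ0 : ∀ u, 0 ≤ ρ u) (hρ1 : ∫ u, ρ u ∂μ = 1) (hexp : Integrable (fun u => exp (a u / c)) μ)
    (hint : Integrable (fun u => (a u - c * log (ρ u)) * ρ u) μ) :
    ∫ u, (a u - c * log (ρ u)) * ρ u ∂μ ≤ c * log (∫ u, exp (a u / c) ∂μ) := by
  have : NeZero μ := ⟨by rintro rfl; simp at hρ1⟩
  set F := ∫ u, exp (a u / c) ∂μ
  have hF : 0 < F := integral_exp_pos hexp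
  have hρ : Integrable ρ μ := .of_integral_ne_zero (by rw [hρ1]; exact one_ne_zero)
  have hbound : ∀ u, (a u - c * log (ρ u)) * ρ u ≤
      c / F * exp (a u / c) + (c * log F - c) * ρ u := by
    intro u
    have h := mul_sub_mul_log_le_exp_sub (hρ0 u) (a u / c - log F)
    rw [exp_sub, exp_log hF] at h
    have hca : c * (a u / c) = a u := mul_div_cancel₀ _ hc.ne'
    linear_combination c * h - ρ u * hca
  calc ∫ u, (a u - c * log (ρ u)) * ρ u ∂μ
      ≤ ∫ u, (c / F * exp (a u / c) + (c * log F - c) * ρ u) ∂μ :=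
        integral_mono hint ((hexp.const_mul _).add (hρ.const_mul _)) hbound
    _ = c * log F := by
        rw [integral_add (hexp.const_mul _) (hρ.const_mul _), integral_const_mul,
          integral_const_mul, hρ1]
        field_simp
        ring

theorem integral_gibbs_mul_sub_log_eq {c : ℝ} (hc : c ≠ 0) {a : α → ℝ}
    (hF : ∫ u, exp (a u / c) ∂μ ≠ 0) :
    ∫ u, (a u - c * log (exp (a u / c) / ∫ v, exp (a v / c) ∂μ)) *
      (exp (a u / c) / ∫ v, exp (a v / c) ∂μ) ∂μ = c * log (∫ u, exp (a u / c) ∂μ) := by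
  set F := ∫ v, exp (a v / c) ∂μ
  have hpt : ∀ u, (a u - c * log (exp (a u / c) / F)) * (exp (a u / c) / F) =
      c * log F * (exp (a u / c) / F) := fun u => by
    rw [log_div (exp_ne_zero _) hF, log_exp]
    field_simp
    ring
  rw [integral_congr_ae (ae_of_all _ hpt), integral_const_mul, integral_div, div_self hF, mul_one]

end Gibbs

theorem nonpos_of_forall_le_imp_le_mul {X : Type*} {f : X → ℝ} {γ : ℝ} (hγ : γ < 1)
    (hf : BddAbove (Set.range f)) (hcontr : ∀ D, (∀ x, f x ≤ D) → ∀ x, f x ≤ γ * D) (x : X) :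
    f x ≤ 0 := by
  have : Nonempty X := ⟨x⟩
  have hsup : ⨆ y, f y ≤ γ * ⨆ y, f y := ciSup_le (hcontr _ (le_ciSup hf))
  nlinarith [le_ciSup hf x]

section RegularizedMDP

variable {𝒳 𝒰 : Type*} [MeasurableSpace 𝒳] [MeasurableSpace 𝒰]
  (μ : Measure 𝒰) (κ : ProbabilityTheory.Kernel (𝒳 × 𝒰) 𝒳) (r : 𝒳 × 𝒰 → ℝ) (h lam γ : ℝ)

noncomputable def actionValue (W : 𝒳 → ℝ) (p : 𝒳 × 𝒰) : ℝ :=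
  r p * h + γ * ∫ y, W y ∂(κ p)

noncomputable def gibbsPolicy (W : 𝒳 → ℝ) (p : 𝒳 × 𝒰) : ℝ :=
  Real.exp (actionValue κ r h γ W p / (lam * h)) /
    ∫ u, Real.exp (actionValue κ r h γ W (p.1, u) / (lam * h)) ∂μ

variable {μ κ r h lam γ}

theorem Tpol_apply (π : 𝒳 × 𝒰 → ℝ) (W : 𝒳 → ℝ) (x : 𝒳) :
    Tpol μ κ r h lam γ π W x =
      ∫ u, (actionValue κ r h γ W (x, u) - lam * h * Real.log (π (x, u))) * π (x, u) ∂μ :=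
  integral_congr_ae (ae_of_all _ fun u => by simp only [actionValue]; ring)

theorem measurable_actionValue (hr : Measurable r) {W : 𝒳 → ℝ} (hW : Measurable W) :
    Measurable (actionValue κ r h γ W) :=
  (hr.mul_const h).add ((hW.stronglyMeasurable.integral_kernel (κ := κ)).measurable.const_mul γ)

theorem abs_integral_kernel_le [ProbabilityTheory.IsMarkovKernel κ] {W : 𝒳 → ℝ} {C : ℝ}
    (hC : ∀ y, |W y| ≤ C) (p : 𝒳 × 𝒰) : |∫ y, W y ∂(κ p)| ≤ C := by
  simpa using norm_integral_le_of_norm_le_const (μ := κ p) (f := W) (ae_of_all _ hC)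

theorem exists_abs_actionValue_le [ProbabilityTheory.IsMarkovKernel κ]
    (hr : ∃ C, ∀ p, |r p| ≤ C) {W : 𝒳 → ℝ} (hW : ∃ C, ∀ y, |W y| ≤ C) :
    ∃ C, ∀ p, |actionValue κ r h γ W p| ≤ C := by
  obtain ⟨Cr, hCr⟩ := hr
  obtain ⟨CW, hCW⟩ := hW
  refine ⟨Cr * |h| + |γ| * CW, fun p => ?_⟩
  calc |actionValue κ r h γ W p| ≤ |r p| * |h| + |γ| * |∫ y, W y ∂(κ p)| := by
        rw [← abs_mul, ← abs_mul]; exact abs_add_le _ _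
    _ ≤ Cr * |h| + |γ| * CW := by
        gcongr
        · exact hCr p
        · exact abs_integral_kernel_le hCW p

theorem isPolicy_exp_div_integral [IsFiniteMeasure μ] [NeZero μ] {G : 𝒳 × 𝒰 → ℝ}
    (hG : Measurable G) (hGB : ∃ C, ∀ p, |G p| ≤ C) :
    IsPolicy μ (fun p => Real.exp (G p) / ∫ u, Real.exp (G (p.1, u)) ∂μ) := by
  obtain ⟨C, hC⟩ := hGB
  have hZm : Measurable fun x => ∫ u, Real.exp (G (x, u)) ∂μ :=
    hG.exp.stronglyMeasurable.integral_prod_right'.measurable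
  have hZ : ∀ x, Real.exp (-C) * μ.real Set.univ ≤ ∫ u, Real.exp (G (x, u)) ∂μ := fun x =>
    calc Real.exp (-C) * μ.real Set.univ = ∫ _, Real.exp (-C) ∂μ := by
          rw [integral_const, smul_eq_mul, mul_comm]
      _ ≤ ∫ u, Real.exp (G (x, u)) ∂μ :=
          integral_mono (integrable_const _)
            (integrable_exp_of_le (hG.comp measurable_prodMk_left) fun u => le_of_abs_le (hC _))
            fun u => Real.exp_le_exp.2 (neg_le_of_abs_le (hC _))
  have hm : 0 < Real.exp (-C) * μ.real Set.univ := mul_pos (Real.exp_pos _) (by simp)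
  have hZpos : ∀ x, 0 < ∫ u, Real.exp (G (x, u)) ∂μ := fun x => hm.trans_le (hZ x)
  refine ⟨hG.exp.div (hZm.comp measurable_fst), ⟨Real.exp C / (Real.exp (-C) * μ.real Set.univ),
    fun p => div_le_div₀ (Real.exp_pos _).le (Real.exp_le_exp.2 (le_of_abs_le (hC p))) hm (hZ p.1)⟩,
    fun p => div_nonneg (Real.exp_pos _).le (hZpos p.1).le, fun x => ?_⟩
  simp only [integral_div, div_self (hZpos x).ne']

section Bounded

variable [IsFiniteMeasure μ] [ProbabilityTheory.IsMarkovKernel κ]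
  (hrm : Measurable r) (hrB : ∃ C, ∀ p, |r p| ≤ C)
  {W : 𝒳 → ℝ} (hWm : Measurable W) (hWB : ∃ C, ∀ y, |W y| ≤ C)
include hrm hrB hWm hWB

theorem integrable_exp_actionValue_div (hc : 0 < lam * h) (x : 𝒳) :
    Integrable (fun u => Real.exp (actionValue κ r h γ W (x, u) / (lam * h))) μ := by
  obtain ⟨C, hC⟩ := exists_abs_actionValue_le (κ := κ) (h := h) (γ := γ) hrB hWB
  exact integrable_exp_of_le
    (((measurable_actionValue hrm hWm).comp measurable_prodMk_left).div_const _)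
    fun u => div_le_div_of_nonneg_right (le_of_abs_le (hC _)) hc.le

theorem integrable_Tpol_integrand (c : ℝ) {π : 𝒳 × 𝒰 → ℝ} (hπ : IsPolicy μ π) (x : 𝒳) :
    Integrable (fun u =>
      (actionValue κ r h γ W (x, u) - c * Real.log (π (x, u))) * π (x, u)) μ := by
  obtain ⟨hπm, ⟨Cπ, hCπ⟩, hπ0, -⟩ := hπ
  obtain ⟨C, hC⟩ := exists_abs_actionValue_le (κ := κ) (h := h) (γ := γ) hrB hWB
  exact integrable_mul_sub_log_mul c
    ((measurable_actionValue hrm hWm).comp measurable_prodMk_left) ⟨C, fun u => hC _⟩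
    (hπm.comp measurable_prodMk_left) (fun u => hπ0 _) ⟨Cπ, fun u => hCπ _⟩

theorem Tpol_le_Tstar (hc : 0 < lam * h) {π : 𝒳 × 𝒰 → ℝ} (hπ : IsPolicy μ π) (x : 𝒳) :
    Tpol μ κ r h lam γ π W x ≤ Tstar μ κ r h lam γ W x := by
  obtain ⟨hπ0, hπ1⟩ := hπ.2.2
  rw [Tpol_apply]
  exact integral_mul_sub_log_le_log_integral_exp hc (fun u => hπ0 _) (hπ1 x)
    (integrable_exp_actionValue_div hrm hrB hWm hWB hc x)
    (integrable_Tpol_integrand hrm hrB hWm hWB _ hπ x)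

theorem Tpol_gibbsPolicy [NeZero μ] (hc : 0 < lam * h) (x : 𝒳) :
    Tpol μ κ r h lam γ (gibbsPolicy μ κ r h lam γ W) W x = Tstar μ κ r h lam γ W x := by
  rw [Tpol_apply]
  exact integral_gibbs_mul_sub_log_eq hc.ne'
    (integral_exp_pos (integrable_exp_actionValue_div hrm hrB hWm hWB hc x)).ne'

theorem isPolicy_gibbsPolicy [NeZero μ] (hc : 0 < lam * h) :
    IsPolicy μ (gibbsPolicy μ κ r h lam γ W) := by
  obtain ⟨C, hC⟩ := exists_abs_actionValue_le (κ := κ) (h := h) (γ := γ) hrB hWB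
  refine isPolicy_exp_div_integral ((measurable_actionValue hrm hWm).div_const _)
    ⟨C / (lam * h), fun p => ?_⟩
  rw [abs_div, abs_of_pos hc]
  exact div_le_div_of_nonneg_right (hC p) hc.le

theorem Tpol_le_Tpol_add (hγ : 0 ≤ γ) {π : 𝒳 × 𝒰 → ℝ} (hπ : IsPolicy μ π)
    {V : 𝒳 → ℝ} (hVm : Measurable V) (hVB : ∃ C, ∀ y, |V y| ≤ C)
    {D : ℝ} (hD : ∀ y, V y - W y ≤ D) (x : 𝒳) :
    Tpol μ κ r h lam γ π V x ≤ Tpol μ κ r h lam γ π W x + γ * D := by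
  obtain ⟨hπ0, hπ1⟩ := hπ.2.2
  have hq : ∀ p, actionValue κ r h γ V p ≤ actionValue κ r h γ W p + γ * D := fun p => by
    have hVi := integrable_of_abs_le (μ := κ p) hVm hVB
    have hWi := integrable_of_abs_le (μ := κ p) hWm hWB
    have hint : ∫ y, V y ∂(κ p) - ∫ y, W y ∂(κ p) ≤ D := by
      rw [← integral_sub hVi hWi]
      simpa using integral_mono (hVi.sub hWi) (integrable_const D) hD
    have := mul_le_mul_of_nonneg_left hint hγ
    simp only [actionValue]
    linarith
  have hπx : Integrable (fun u => π (x, u)) μ :=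
    .of_integral_ne_zero (by rw [hπ1 x]; exact one_ne_zero)
  have hWint :=
    integrable_Tpol_integrand (κ := κ) (h := h) (γ := γ) hrm hrB hWm hWB (lam * h) hπ x
  rw [Tpol_apply, Tpol_apply]
  calc ∫ u, (actionValue κ r h γ V (x, u) - lam * h * Real.log (π (x, u))) * π (x, u) ∂μ
      ≤ ∫ u, ((actionValue κ r h γ W (x, u) - lam * h * Real.log (π (x, u))) * π (x, u) +
          γ * D * π (x, u)) ∂μ :=
        integral_mono (integrable_Tpol_integrand hrm hrB hVm hVB _ hπ x)
          (hWint.add (hπx.const_mul _)) fun u => by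
            linear_combination mul_le_mul_of_nonneg_right (hq (x, u)) (hπ0 (x, u))
    _ = _ := by rw [integral_add hWint (hπx.const_mul _), integral_const_mul, hπ1 x, mul_one]

end Bounded

theorem le_of_isFixedPt_Tpol_of_isFixedPt_Tstar [IsFiniteMeasure μ]
    [ProbabilityTheory.IsMarkovKernel κ] (hc : 0 < lam * h) (hγ0 : 0 ≤ γ) (hγ1 : γ < 1)
    (hrm : Measurable r) (hrB : ∃ C, ∀ p, |r p| ≤ C) {π : 𝒳 × 𝒰 → ℝ} (hπ : IsPolicy μ π)
    {V : 𝒳 → ℝ} (hVm : Measurable V) (hVB : ∃ C, ∀ y, |V y| ≤ C)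
    (hV : Function.IsFixedPt (Tpol μ κ r h lam γ π) V)
    {W : 𝒳 → ℝ} (hWm : Measurable W) (hWB : ∃ C, ∀ y, |W y| ≤ C)
    (hW : Function.IsFixedPt (Tstar μ κ r h lam γ) W)
    (x : 𝒳) : V x ≤ W x := by
  obtain ⟨CV, hCV⟩ := hVB
  obtain ⟨CW, hCW⟩ := hWB
  refine sub_nonpos.1 (nonpos_of_forall_le_imp_le_mul (f := fun y => V y - W y) hγ1
    ⟨CV + CW, ?_⟩ (fun D hD z => ?_) x)
  · rintro _ ⟨y, rfl⟩
    linarith [(abs_le.1 (hCV y)).2, (abs_le.1 (hCW y)).1]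
  · calc V z - W z = Tpol μ κ r h lam γ π V z - Tstar μ κ r h lam γ W z := by rw [hV.eq, hW.eq]
      _ ≤ Tpol μ κ r h lam γ π W z + γ * D - Tpol μ κ r h lam γ π W z :=
        sub_le_sub (Tpol_le_Tpol_add hrm hrB hWm ⟨CW, hCW⟩ hγ0 hπ hVm ⟨CV, hCV⟩ hD z)
          (Tpol_le_Tstar hrm hrB hWm ⟨CW, hCW⟩ hc hπ z)
      _ = γ * D := by ring

end RegularizedMDP

/-- **Dynamic programming principle for the regularized MDP** (Proposition C.1 in
kernel form): for every `x`, `V_h(x)` is the greatest value `V^π(x)` over all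
policies `π` (where `V^π` is the unique bounded measurable fixed point of `T^π`),
and the supremum is attained by the Gibbs policy `π*_h`. -/
theorem dynamic_programming_principle
    {𝒳 𝒰 : Type*} [MeasurableSpace 𝒳] [MeasurableSpace 𝒰]
    (μ : Measure 𝒰) [IsFiniteMeasure μ] (hμpos : 0 < μ Set.univ)
    (κ : ProbabilityTheory.Kernel (𝒳 × 𝒰) 𝒳) [ProbabilityTheory.IsMarkovKernel κ]
    (r : 𝒳 × 𝒰 → ℝ) (hrmeas : Measurable r) (hrbdd : ∃ C : ℝ, ∀ p, |r p| ≤ C)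
    (h lam γ : ℝ) (hh : 0 < h) (hlam : 0 < lam) (hγ : γ ∈ Set.Ioo (0 : ℝ) 1)
    (Vh : 𝒳 → ℝ) (hVhmeas : Measurable Vh) (hVhbdd : ∃ C : ℝ, ∀ x, |Vh x| ≤ C)
    (hVhfix : Tstar μ κ r h lam γ Vh = Vh)
    (πstar : 𝒳 × 𝒰 → ℝ)
    (hπstar : πstar = fun p =>
      Real.exp ((r p * h + γ * ∫ y, Vh y ∂(κ p)) / (lam * h)) /
        ∫ u', Real.exp ((r (p.1, u') * h + γ * ∫ y, Vh y ∂(κ (p.1, u'))) / (lam * h)) ∂μ) :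
    IsPolicy μ πstar ∧
    Tpol μ κ r h lam γ πstar Vh = Vh ∧
    ∀ x : 𝒳, IsGreatest
      {v : ℝ | ∃ (π : 𝒳 × 𝒰 → ℝ) (Vπ : 𝒳 → ℝ), IsPolicy μ π ∧ Measurable Vπ ∧
        (∃ C : ℝ, ∀ y, |Vπ y| ≤ C) ∧ Tpol μ κ r h lam γ π Vπ = Vπ ∧ v = Vπ x}
      (Vh x) := by
  obtain rfl : πstar = gibbsPolicy μ κ r h lam γ Vh := hπstar
  have : NeZero μ := ⟨Measure.measure_univ_pos.mp hμpos⟩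
  have hc : 0 < lam * h := mul_pos hlam hh
  have hpol : IsPolicy μ (gibbsPolicy μ κ r h lam γ Vh) :=
    isPolicy_gibbsPolicy hrmeas hrbdd hVhmeas hVhbdd hc
  have hfix : Tpol μ κ r h lam γ (gibbsPolicy μ κ r h lam γ Vh) Vh = Vh :=
    funext fun x => (Tpol_gibbsPolicy hrmeas hrbdd hVhmeas hVhbdd hc x).trans (congrFun hVhfix x)
  refine ⟨hpol, hfix, fun x => ⟨⟨_, Vh, hpol, hVhmeas, hVhbdd, hfix, rfl⟩, ?_⟩⟩
  rintro _ ⟨π, Vπ, hπ, hVπm, hVπB, hVπfix, rfl⟩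
  exact le_of_isFixedPt_Tpol_of_isFixedPt_Tstar hc hγ.1.le hγ.2 hrmeas hrbdd hπ hVπm hVπB hVπfix
    hVhmeas hVhbdd hVhfix x
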